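/- Let H be a complex inner product space, q ∈ ℝ, and let ξ ∈ H be a unit vector (⟨ξ, ξ⟩ = 1). Then for every n ≥ 0, evaluating the q-Hermite polynomial H_n^q on the field operator s_ξ and applying it to the vacuum gives H_n^q(s_ξ)(Ω) = ξ^{⊗n} (with ξ^{⊗0} = Ω). -/

import Mathlib

noncomputable section

variable {H : Type*} [NormedAddCommGroup H] [InnerProductSpace ℂ H]

/-- `[n]_q = 1 + q + ⋯ + q^(n-1)`. -/
def qInt (q : ℝ) (n : ℕ) : ℝ := ∑ i ∈ Finset.range n, q ^ i

/-- The `q`-Hermite polynomials (with complex coefficients):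
`H₀ = 1`, `H₁ = X` and `X·Hₙ = Hₙ₊₁ + [n]_q·Hₙ₋₁`. -/
def qHermite (q : ℝ) : ℕ → Polynomial ℂ
  | 0 => 1
  | 1 => Polynomial.X
  | n + 2 =>
      Polynomial.X * qHermite q (n + 1) - Polynomial.C ((qInt q (n + 1) : ℝ) : ℂ) * qHermite q n

/-- The simple tensor `ζ 0 ⊗ ⋯ ⊗ ζ (n-1)` in the algebraic Fock space
`F(H) = ⨁ₙ H^{⊗n}`, realized as the tensor algebra (for `n = 0` this is the
vacuum vector `Ω = 1`). -/
def st (n : ℕ) (ζ : Fin n → H) : TensorAlgebra ℂ H :=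
  (List.ofFn fun i => TensorAlgebra.ι ℂ (ζ i)).prod

/-- Remove the `i`-th entry from a tuple. -/
def removeNth {α : Type*} : {n : ℕ} → Fin n → (Fin n → α) → Fin (n - 1) → α
  | 0, i, _ => i.elim0
  | _ + 1, i, ζ => fun j => ζ (i.succAbove j)

/-- `c` is the family of `q`-creation operators. -/
def IsCreation (c : H → Module.End ℂ (TensorAlgebra ℂ H)) : Prop :=
  ∀ (ξ : H) (n : ℕ) (ζ : Fin n → H), c ξ (st n ζ) = st (n + 1) (Fin.cons ξ ζ)

/-- `a` is the family of `q`-annihilation operators. -/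
def IsAnnihilation (q : ℝ) (a : H → Module.End ℂ (TensorAlgebra ℂ H)) : Prop :=
  ∀ (ξ : H) (n : ℕ) (ζ : Fin n → H),
    a ξ (st n ζ) =
      ∑ i : Fin n, ((q : ℂ) ^ (i : ℕ) * (inner ℂ ξ (ζ i) : ℂ)) • st (n - 1) (removeNth i ζ)

lemma st_zero (ζ : Fin 0 → H) : st 0 ζ = 1 := rfl

lemma qInt_zero (q : ℝ) : qInt q 0 = 0 := by
  simp [qInt]

lemma removeNth_const {α : Type*} {n : ℕ} (i : Fin n) (x : α) :
    removeNth i (fun _ => x) = fun _ => x := by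
  cases n with
  | zero => exact i.elim0
  | succ m => rfl

section FockSpace

variable {c a : H → Module.End ℂ (TensorAlgebra ℂ H)} {q : ℝ}

lemma IsCreation.apply_st_const (hc : IsCreation c) (ξ : H) (n : ℕ) :
    c ξ (st n fun _ => ξ) = st (n + 1) fun _ => ξ :=
  (hc ξ n _).trans (congrArg _ (Fin.cons_self_tail fun _ : Fin (n + 1) => ξ))

lemma IsAnnihilation.apply_st_const (ha : IsAnnihilation q a) (ξ ζ : H) (n : ℕ) :
    a ξ (st n fun _ => ζ) = (inner ℂ ξ ζ * (qInt q n : ℂ)) • st (n - 1) fun _ => ζ := by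
  rw [ha, qInt, Complex.ofReal_sum, Finset.mul_sum, Finset.sum_smul,
    ← Fin.sum_univ_eq_sum_range]
  simp only [removeNth_const, Complex.ofReal_pow, mul_comm]

/-- The three-term recurrence of `H_n^q` is mirrored by the action of `s_ξ` on `ξ^{⊗n}`. -/
lemma field_apply_st_const (hc : IsCreation c) (ha : IsAnnihilation q a) {ξ : H}
    (hξ : (inner ℂ ξ ξ : ℂ) = 1) (n : ℕ) :
    (c ξ + a ξ) (st n fun _ => ξ) =
      st (n + 1) (fun _ => ξ) + (qInt q n : ℂ) • st (n - 1) fun _ => ξ := by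
  rw [LinearMap.add_apply, hc.apply_st_const, ha.apply_st_const, hξ, one_mul]

end FockSpace

/-- For a unit vector `ξ`, `H_n^q(s_ξ) Ω = ξ^{⊗n}`. -/
theorem stmt9 (q : ℝ) (c a : H → Module.End ℂ (TensorAlgebra ℂ H))
    (hc : IsCreation c) (ha : IsAnnihilation q a)
    (ξ : H) (hξ : (inner ℂ ξ ξ : ℂ) = 1) (n : ℕ) :
    (Polynomial.aeval (c ξ + a ξ) (qHermite q n)) (1 : TensorAlgebra ℂ H) =
      st n (fun _ => ξ) := by
  induction n using Nat.twoStepInduction with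
  | zero => simp [qHermite, st_zero]
  | one =>
    rw [qHermite, Polynomial.aeval_X, ← st_zero (fun _ => ξ),
      field_apply_st_const hc ha hξ, qInt_zero, Complex.ofReal_zero, zero_smul, add_zero]
  | more m ih₀ ih₁ =>
    simp only [qHermite, map_sub, map_mul, Polynomial.aeval_X, Polynomial.aeval_C,
      LinearMap.sub_apply, Module.End.mul_apply, Algebra.algebraMap_eq_smul_one,
      LinearMap.smul_apply, Module.End.one_apply, ih₀, ih₁]
    rw [field_apply_st_const hc ha hξ, Nat.add_sub_cancel, add_sub_cancel_right]
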